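/- For each X ∈ {L, KP, S}, Autf_X(Σ, e) = Autf_X^ω(Σ, e); that is, an automorphism σ ∈ Aut_e(Σ) satisfies c ≡^X_e σ(c) for every small tuple c of realizations of Σ if and only if it satisfies this for every countable tuple of realizations of Σ. -/

import Mathlib

/- Framework: relativized Lascar groups of a first-order theory over a
hyperimaginary, following "Relativized Galois groups of first order theories
over a hyperimaginary" by H. Lee and J. Lee. -/

open FirstOrder Cardinal Pointwise

universe u

namespace RelLascar

variable {L : FirstOrder.Language.{u, u}} {M : Type u} [L.Structure M]

/-- The group of automorphisms of the monster model `M`. -/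
instance : Group (M ≃[L] M) where
  mul f g := f.comp g
  one := FirstOrder.Language.Equiv.refl L M
  inv f := f.symm
  mul_assoc f g h := (FirstOrder.Language.Equiv.comp_assoc h g f).symm
  one_mul := FirstOrder.Language.Equiv.refl_comp
  mul_one := FirstOrder.Language.Equiv.comp_refl
  inv_mul_cancel := FirstOrder.Language.Equiv.symm_comp_self

/-- Automorphisms act on the monster model. -/
instance : MulAction (M ≃[L] M) M where
  smul f x := f x
  one_smul _ := rfl
  mul_smul _ _ _ := rfl

@[simp] theorem autSmul_def (f : M ≃[L] M) (x : M) : f • x = f x := rfl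

/-- The solution set in `M` of a set of formulas in variables `ι` with
parameters `prm : π → M`. -/
def SolSet {ι π : Type u} (p : Set (L.Formula (ι ⊕ π))) (prm : π → M) : Set (ι → M) :=
  {v | ∀ φ ∈ p, φ.Realize (Sum.elim v prm)}

/-- A set of `ι`-tuples is type-definable over the parameters `prm`. -/
def TypeDefinableOver {ι π : Type u} (prm : π → M) (X : Set (ι → M)) : Prop :=
  ∃ p : Set (L.Formula (ι ⊕ π)), X = SolSet p prm

/-- Two tuples have the same (complete) type over `∅`. -/
def SameTp {ι : Type u} (c d : ι → M) : Prop :=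
  ∀ φ : L.Formula ι, φ.Realize c ↔ φ.Realize d

/-- `M` is a monster model with degree of saturation and strong homogeneity `κ`:
`κ` is uncountable, tuples of size `< κ` with the same type are conjugate under an
automorphism, and every partial type in `< κ` variables over `< κ` parameters that
is finitely realized in `M` is realized in `M`.  ("Small" means of size `< κ`.) -/
def IsMonster (κ : Cardinal.{u}) (L : FirstOrder.Language.{u, u}) (M : Type u) [L.Structure M] : Prop :=
  ℵ₀ < κ ∧
  (∀ (ι : Type u) (c d : ι → M), #ι < κ → SameTp (L := L) (M := M) c d →
      ∃ f : M ≃[L] M, ∀ i, f (c i) = d i) ∧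
  (∀ (ι π : Type u) (prm : π → M) (p : Set (L.Formula (ι ⊕ π))), #ι < κ → #π < κ →
      (∀ q : Finset (L.Formula (ι ⊕ π)), ↑q ⊆ p →
        ∃ v : ι → M, ∀ φ ∈ (q : Set (L.Formula (ι ⊕ π))), φ.Realize (Sum.elim v prm)) →
      ∃ v : ι → M, v ∈ SolSet p prm)

variable (κ : Cardinal.{u})

section Hyperimaginary

/- The hyperimaginary `e = a_E`, where `E` is the `∅`-type-definable equivalence
relation defined by the set of formulas `pE` and `a : γ → M`. -/
variable {γ : Type u} (pE : Set (L.Formula (γ ⊕ γ))) (a : γ → M)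

/-- The relation defined by a set of formulas in variables `δ ⊕ δ` (with no
parameters); for `pE` this is the equivalence relation `E`. -/
def Frel {δ : Type u} (pF : Set (L.Formula (δ ⊕ δ))) (x y : δ → M) : Prop :=
  ∀ φ ∈ pF, φ.Realize (Sum.elim x y)

/-- The class of a tuple `x` under the relation defined by `pF`; for an
equivalence relation this is the hyperimaginary `x_F` (as a set of representatives). -/
def Fclass {δ : Type u} (pF : Set (L.Formula (δ ⊕ δ))) (x : δ → M) : Set (δ → M) :=
  {y | Frel pF x y}

/-- `Aut_e(𝔠)`: the subgroup of automorphisms fixing the hyperimaginary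
`e = a_E` setwise. -/
def AutE : Subgroup (M ≃[L] M) := MulAction.stabilizer (M ≃[L] M) (Fclass pE a)

/-- `Aut_e(𝔠)` as a group. -/
abbrev Ge := ↥(AutE pE a)

/-- The hyperimaginary `e` is definable over the tuple `t` (i.e. `e ∈ dcl(t)`):
every automorphism fixing `t` pointwise fixes `e`. -/
def eInDclTuple {ι : Type u} (t : ι → M) : Prop :=
  ∀ f : M ≃[L] M, (∀ i, f (t i) = t i) → f ∈ AutE pE a

/-- The set of elements of `Aut_e(𝔠)` fixing pointwise some small elementary
substructure (model) `N` with `e ∈ dcl(N)`. -/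
def modelFixers : Set (Ge pE a) :=
  {f | ∃ N : L.ElementarySubstructure M, #N < κ ∧
        (∀ g : M ≃[L] M, (∀ x ∈ N, g x = x) → g ∈ AutE pE a) ∧
        ∀ x ∈ N, (f : M ≃[L] M) x = x}

/-- `Autf_L(𝔠, e)`: the normal subgroup of `Aut_e(𝔠)` generated by the
pointwise stabilizers of small models `N` with `e ∈ dcl(N)`. -/
def AutfL : Subgroup (Ge pE a) := Subgroup.normalClosure (modelFixers κ pE a)

/-- `c ≡ᴸ_e d` : the tuples have the same Lascar strong type over `e`. -/
def LEq {ι : Type u} (c d : ι → M) : Prop := ∃ f ∈ AutfL κ pE a, f • c = d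

theorem LEq.refl {ι : Type u} (c : ι → M) : LEq κ pE a c c :=
  ⟨1, one_mem _, one_smul _ _⟩

theorem LEq.symm {ι : Type u} {c d : ι → M} (h : LEq κ pE a c d) : LEq κ pE a d c := by
  obtain ⟨f, hf, rfl⟩ := h
  exact ⟨f⁻¹, inv_mem hf, inv_smul_smul f c⟩

theorem LEq.trans {ι : Type u} {c d e : ι → M} (h1 : LEq κ pE a c d)
    (h2 : LEq κ pE a d e) : LEq κ pE a c e := by
  obtain ⟨f, hf, rfl⟩ := h1
  obtain ⟨g, hg, rfl⟩ := h2
  exact ⟨g * f, mul_mem hg hf, (mul_smul g f c).symm ▸ rfl⟩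

end Hyperimaginary

section Sigma

variable {γ : Type u} (pE : Set (L.Formula (γ ⊕ γ))) (a : γ → M)
variable {V β : Type u} {pS : Set (L.Formula (V ⊕ β))} {bp : β → M}

/-- The solution set `Σ(𝔠)` of the partial type `Σ` (given by formulas `pS` over
the parameters `bp`). -/
abbrev Sol (pS : Set (L.Formula (V ⊕ β))) (bp : β → M) : Set (V → M) := SolSet pS bp

/-- The type of realizations of `Σ`. -/
abbrev SolT (pS : Set (L.Formula (V ⊕ β))) (bp : β → M) := ↥(Sol pS bp)

variable (pS bp) in
/-- The partial type `Σ` is `e`-invariant. -/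
def SolInv : Prop := ∀ (g : Ge pE a) (v : V → M), v ∈ Sol pS bp → g • v ∈ Sol pS bp

/-- The restriction homomorphism `Aut_e(𝔠) → Perm(Σ(𝔠))`, `f ↦ f ↾ Σ(𝔠)`. -/
def resPerm (hInv : SolInv pE a pS bp) : Ge pE a →* Equiv.Perm (SolT pS bp) where
  toFun g :=
    { toFun := fun v => ⟨g • (v : V → M), hInv g v v.2⟩
      invFun := fun v => ⟨g⁻¹ • (v : V → M), hInv g⁻¹ v v.2⟩
      left_inv := fun v => Subtype.ext (inv_smul_smul g (v : V → M))
      right_inv := fun v => Subtype.ext (smul_inv_smul g (v : V → M)) }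
  map_one' := Equiv.ext fun v => Subtype.ext (one_smul (Ge pE a) (v : V → M))
  map_mul' g h := Equiv.ext fun v => Subtype.ext (mul_smul g h (v : V → M))

/-- `Aut_e(Σ) = {f ↾ Σ(𝔠) : f ∈ Aut_e(𝔠)}`, as a subgroup of the permutations of
`Σ(𝔠)`. -/
def AutES (hInv : SolInv pE a pS bp) : Subgroup (Equiv.Perm (SolT pS bp)) :=
  (resPerm pE a hInv).range

/-- `Aut_e(Σ)` as a group. -/
abbrev GS (hInv : SolInv pE a pS bp) := ↥(AutES pE a hInv)

/-- The restriction map `ξ : Aut_e(𝔠) → Aut_e(Σ)`. -/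
def toGS (hInv : SolInv pE a pS bp) : Ge pE a →* GS pE a hInv :=
  (resPerm pE a hInv).rangeRestrict

/-- A tuple of realizations of `Σ`, flattened to a tuple of elements of `M`. -/
def flat {ι : Type u} (c : ι → SolT pS bp) : ι × V → M := fun p => (c p.1 : V → M) p.2

theorem flat_toGS_smul (hInv : SolInv pE a pS bp) {ι : Type u} (g : Ge pE a)
    (c : ι → SolT pS bp) : flat ((toGS pE a hInv g) • c) = g • flat c := rfl

theorem flat_smul_of_res (hInv : SolInv pE a pS bp) {ι : Type u} {τ : GS pE a hInv}
    {g : Ge pE a} (hg : resPerm pE a hInv g = ↑τ) (c : ι → SolT pS bp) :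
    flat (τ • c) = g • flat c := by
  have : τ = toGS pE a hInv g := Subtype.ext hg.symm
  subst this
  rfl

/-- `Autf_L(Σ, e)`: the subgroup of `Aut_e(Σ)` consisting of those restricted
automorphisms `σ` such that every small tuple of realizations of `Σ` has the same
Lascar strong type over `e` as its image under `σ`. -/
def AutfLS (hInv : SolInv pE a pS bp) : Subgroup (GS pE a hInv) where
  carrier := {σ | ∀ (ι : Type u), #ι < κ → ∀ c : ι → SolT pS bp,
      LEq κ pE a (flat c) (flat (σ • c))}
  one_mem' := by
    intro ι _ c
    rw [one_smul]
    exact LEq.refl κ pE a _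
  mul_mem' := by
    intro σ τ hσ hτ ι hι c
    rw [mul_smul]
    exact LEq.trans κ pE a (hτ ι hι c) (hσ ι hι (τ • c))
  inv_mem' := by
    intro σ hσ ι hι c
    have h := hσ ι hι (σ⁻¹ • c)
    rw [smul_inv_smul] at h
    exact LEq.symm κ pE a h

theorem AutfLS_normal (hInv : SolInv pE a pS bp) : (AutfLS κ pE a hInv).Normal := by
  constructor
  intro σ hσ τ ι hι c
  obtain ⟨g, hg⟩ := τ.2
  have hginv : resPerm pE a hInv g⁻¹ = ↑τ⁻¹ := by
    rw [map_inv, hg]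
    rfl
  obtain ⟨f, hf, hfe⟩ := hσ ι hι (τ⁻¹ • c)
  refine ⟨g * f * g⁻¹, (Subgroup.normalClosure_normal).conj_mem f hf g, ?_⟩
  have h1 : flat (τ⁻¹ • c) = g⁻¹ • flat c := flat_smul_of_res pE a hInv hginv c
  have h2 : flat ((τ * σ * τ⁻¹) • c) = g • flat (σ • τ⁻¹ • c) := by
    rw [mul_smul, mul_smul]
    exact flat_smul_of_res pE a hInv hg _
  rw [h2, ← hfe, h1, ← mul_smul, ← mul_smul]

/-- The relativized Lascar group `Gal_L(Σ, e) = Aut_e(Σ) / Autf_L(Σ, e)`. -/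
def GalL (hInv : SolInv pE a pS bp) := GS pE a hInv ⧸ AutfLS κ pE a hInv

/-- The projection `π_b : Aut_e(Σ) → Gal_L(Σ, e)`. -/
def projb (hInv : SolInv pE a pS bp) : GS pE a hInv → GalL κ pE a hInv :=
  QuotientGroup.mk

/-- The projection `π_Σ : Aut_e(𝔠) → Gal_L(Σ, e)`. -/
def projS (hInv : SolInv pE a pS bp) : Ge pE a → GalL κ pE a hInv :=
  fun g => projb κ pE a hInv (toGS pE a hInv g)

/-- A Lascar tuple in `Σ` over `e`: a small tuple `b` of realizations of `Σ` such
that `Autf_L(Σ, e) = {σ ∈ Aut_e(Σ) : b ≡ᴸ_e σ(b)}`. -/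
def IsLascarTuple (hInv : SolInv pE a pS bp) {ιb : Type u} (b : ιb → SolT pS bp) : Prop :=
  #ιb < κ ∧ ∀ σ : GS pE a hInv,
    σ ∈ AutfLS κ pE a hInv ↔ LEq κ pE a (flat b) (flat (σ • b))

variable (pS bp) in
/-- `e ∈ dcl(Σ)`: there is a small tuple of realizations of `Σ` over which `e` is
definable. -/
def eInDclSigma : Prop :=
  ∃ (ι : Type u) (c : ι → SolT pS bp), #ι < κ ∧ eInDclTuple pE a (flat c)

/-- The complete type of the tuple `v` over the parameters `prm` (with both
indexed by `ι`): the set of formulas realized by `v` with parameters `prm`. -/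
def tpOver {ι : Type u} (prm v : ι → M) : Set (L.Formula (ι ⊕ ι)) :=
  {φ | φ.Realize (Sum.elim v prm)}

/-- The type space `S_b(b) = {tp(f(b)/b) : f ∈ Aut_e(𝔠)}` over a tuple `b` of
realizations of `Σ`. -/
def Sb {ιb : Type u} (b : ιb → SolT pS bp) :
    Set (Set (L.Formula ((ιb × V) ⊕ (ιb × V)))) :=
  Set.range fun g : Ge pE a => tpOver (flat b) (g • flat b)

/-- The logic topology on a set of types: the subspace topology induced from the
product topology on `Formula → Bool` via characteristic functions. -/
noncomputable def typeSetTop {F : Type u} (X : Set (Set F)) : TopologicalSpace ↥X :=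
  TopologicalSpace.induced
    (fun p (φ : F) => (p : Set F).boolIndicator φ) inferInstance

/-- The map `ν_b : S_b(b) → Gal_L(Σ, e)`, `tp(σ(b)/b) ↦ [σ]`. -/
noncomputable def nub (hInv : SolInv pE a pS bp) {ιb : Type u} (b : ιb → SolT pS bp) :
    ↥(Sb pE a b) → GalL κ pE a hInv :=
  fun p => projS κ pE a hInv (Set.mem_range.mp p.2).choose

/-- The topology `𝔱_b` on the relativized Lascar group `Gal_L(Σ, e)`: the quotient
topology induced by `ν_b` from the logic topology on `S_b(b)`. -/
noncomputable def galTopb (hInv : SolInv pE a pS bp) {ιb : Type u}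
    (b : ιb → SolT pS bp) : TopologicalSpace (GalL κ pE a hInv) :=
  (typeSetTop (Sb pE a b)).coinduced (nub κ pE a hInv b)

end Sigma

section GalT

variable {γ : Type u} (pE : Set (L.Formula (γ ⊕ γ))) (a : γ → M)

/-- The Lascar group `Gal_L(T, e) = Aut_e(𝔠) / Autf_L(𝔠, e)`. -/
def GalT := Ge pE a ⧸ AutfL κ pE a

/-- The projection `π : Aut_e(𝔠) → Gal_L(T, e)`. -/
def projT : Ge pE a → GalT κ pE a := QuotientGroup.mk

/-- The type space `S_N(N) = {tp(f(N)/N) : f ∈ Aut_e(𝔠)}` over a small model `N`. -/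
def SMod (N : L.ElementarySubstructure M) : Set (Set (L.Formula (↥N ⊕ ↥N))) :=
  Set.range fun g : Ge pE a =>
    tpOver (Subtype.val : ↥N → M) (g • (Subtype.val : ↥N → M))

/-- The map `ν : S_N(N) → Gal_L(T, e)`, `tp(f(N)/N) ↦ [f]`. -/
noncomputable def nuT (N : L.ElementarySubstructure M) :
    ↥(SMod pE a N) → GalT κ pE a :=
  fun p => projT κ pE a (Set.mem_range.mp p.2).choose

/-- The standard quotient topology on the Lascar group `Gal_L(T, e)` induced via
the type space over a small model `N` (with `e ∈ dcl(N)`). -/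
noncomputable def galTopT (N : L.ElementarySubstructure M) :
    TopologicalSpace (GalT κ pE a) :=
  (typeSetTop (SMod pE a N)).coinduced (nuT κ pE a N)

/-- `Autf_KP(𝔠, e)`: the preimage under `π` of the closure of the identity in
`Gal_L(T, e)`. -/
noncomputable def AutfKPset (N : L.ElementarySubstructure M) : Set (Ge pE a) :=
  projT κ pE a ⁻¹' (@closure _ (galTopT κ pE a N) {projT κ pE a 1})

/-- `Autf_S(𝔠, e)`: the preimage under `π` of the connected component of the
identity in `Gal_L(T, e)`. -/
noncomputable def AutfSset (N : L.ElementarySubstructure M) : Set (Ge pE a) :=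
  projT κ pE a ⁻¹' (@connectedComponent _ (galTopT κ pE a N) (projT κ pE a 1))

/-- `c ≡ᴷᴾ_e d` : the tuples have the same KP strong type over `e`. -/
def KPeq (N : L.ElementarySubstructure M) {ι : Type u} (c d : ι → M) : Prop :=
  ∃ f ∈ AutfKPset κ pE a N, f • c = d

/-- `c ≡ˢ_e d` : the tuples have the same Shelah strong type over `e`. -/
def Seq (N : L.ElementarySubstructure M) {ι : Type u} (c d : ι → M) : Prop :=
  ∃ f ∈ AutfSset κ pE a N, f • c = d

end GalT

section Relativized

variable {γ : Type u} (pE : Set (L.Formula (γ ⊕ γ))) (a : γ → M)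
variable {V β : Type u} {pS : Set (L.Formula (V ⊕ β))} {bp : β → M}

/-- `Autf_KP(Σ, e)`: the set of restricted automorphisms fixing the KP strong
type of every small tuple of realizations of `Σ`. -/
noncomputable def AutfKPSset (hInv : SolInv pE a pS bp) (N : L.ElementarySubstructure M) :
    Set (GS pE a hInv) :=
  {σ | ∀ (ι : Type u), #ι < κ → ∀ c : ι → SolT pS bp,
      KPeq κ pE a N (flat c) (flat (σ • c))}

/-- `Autf_S(Σ, e)`: the set of restricted automorphisms fixing the Shelah strong
type of every small tuple of realizations of `Σ`. -/
noncomputable def AutfSSset (hInv : SolInv pE a pS bp) (N : L.ElementarySubstructure M) :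
    Set (GS pE a hInv) :=
  {σ | ∀ (ι : Type u), #ι < κ → ∀ c : ι → SolT pS bp,
      Seq κ pE a N (flat c) (flat (σ • c))}

/-- The orbit under `Aut_e(𝔠)` of the hyperimaginary given by the class of `x`
under the relation defined by `pF` is small ("`x_F` is bounded over `e`"). -/
def BoundedClass {δ : Type u} (pF : Set (L.Formula (δ ⊕ δ))) (x : δ → M) : Prop :=
  #↥(Set.range fun g : Ge pE a => g • Fclass pF x) < κ

/-- The orbit under `Aut_e(𝔠)` of the hyperimaginary given by the class of `x` is
finite ("`x_F` is algebraic over `e`"). -/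
def FiniteClass {δ : Type u} (pF : Set (L.Formula (δ ⊕ δ))) (x : δ → M) : Prop :=
  (Set.range fun g : Ge pE a => g • Fclass pF x).Finite

/-- `f` fixes the hyperimaginary given by the class of `x` (setwise). -/
def FixesClass (f : Ge pE a) {δ : Type u} (pF : Set (L.Formula (δ ⊕ δ)))
    (x : δ → M) : Prop :=
  f • Fclass pF x = Fclass pF x

variable (pS bp) in
/-- `f` fixes every hyperimaginary that is bounded over `e` and has a
representative which is a small tuple of realizations of `Σ`, i.e. `f` fixes
`bdd(e) ∩ Σ` pointwise. -/
def fixesAllBddS (f : Ge pE a) : Prop :=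
  ∀ (ι : Type u) (pF : Set (L.Formula ((ι × V) ⊕ (ι × V)))) (c : ι → SolT pS bp),
    #ι < κ → Equivalence (Frel (M := M) pF) → BoundedClass κ pE a pF (flat c) →
    FixesClass pE a f pF (flat c)

variable (pS bp) in
/-- `f` fixes every hyperimaginary that is algebraic over `e` and has a
representative which is a small tuple of realizations of `Σ`, i.e. `f` fixes
`acl(e) ∩ Σ` pointwise. -/
def fixesAllAclS (f : Ge pE a) : Prop :=
  ∀ (ι : Type u) (pF : Set (L.Formula ((ι × V) ⊕ (ι × V)))) (c : ι → SolT pS bp),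
    #ι < κ → Equivalence (Frel (M := M) pF) → FiniteClass pE a pF (flat c) →
    FixesClass pE a f pF (flat c)

end Relativized


section More

variable {γ : Type u} (pE : Set (L.Formula (γ ⊕ γ))) (a : γ → M)
variable {V β : Type u} {pS : Set (L.Formula (V ⊕ β))} {bp : β → M}

theorem mem_AutfLS_iff (hInv : SolInv pE a pS bp) {σ : GS pE a hInv} :
    σ ∈ AutfLS κ pE a hInv ↔ ∀ (ι : Type u), #ι < κ → ∀ c : ι → SolT pS bp,
      LEq κ pE a (flat c) (flat (σ • c)) := Iff.rfl

theorem toGS_mem_autfLS (hInv : SolInv pE a pS bp) {f : Ge pE a}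
    (hf : f ∈ AutfL κ pE a) : toGS pE a hInv f ∈ AutfLS κ pE a hInv :=
  (mem_AutfLS_iff κ pE a hInv).mpr
    (fun ι _ c => ⟨f, hf, (flat_toGS_smul pE a hInv f c).symm⟩)

instance AutfL_normal : (AutfL κ pE a).Normal :=
  Subgroup.normalClosure_normal

/-- The group structure of the relativized Lascar group `Gal_L(Σ, e)`. -/
noncomputable def galLGroup (hInv : SolInv pE a pS bp) : Group (GalL κ pE a hInv) :=
  @QuotientGroup.Quotient.group _ _ (AutfLS κ pE a hInv) (AutfLS_normal κ pE a hInv)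

/-- The natural projection `ξ_L : Gal_L(T, e) → Gal_L(Σ, e)`. -/
noncomputable def xiL (hInv : SolInv pE a pS bp) : GalT κ pE a → GalL κ pE a hInv :=
  haveI := AutfLS_normal κ pE a hInv
  ⇑(QuotientGroup.map (AutfL κ pE a) (AutfLS κ pE a hInv) (toGS pE a hInv)
    (fun _ hf => Subgroup.mem_comap.mpr (toGS_mem_autfLS κ pE a hInv hf)))

/-- The orbit equivalence relation `≡ᴴ` of a set `H` of restricted automorphisms,
on tuples of realizations of `Σ`. -/
def orbEq {hInv : SolInv pE a pS bp} (H : Set (GS pE a hInv)) {ι : Type u}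
    (c d : ι → SolT pS bp) : Prop :=
  ∃ h ∈ H, h • c = d

end More

/-!
The orbit relations involved are type-definable over the small model `N`, hence of finite
character: they hold of a small tuple as soon as they hold of its finite subtuples, which are
countable. For `KP` and `S`, membership of `f` in `Autf_X(𝔠, e)` is a closed condition on the image
of `f` in `Gal_L(T, e)`, i.e. a closed condition on `tp(f(N)/N)`. For Lascar strong types only
bounded Lascar distance is type-definable: `Autf_L(𝔠, e)` moves a small tuple by a product of `n`
conjugates of the pointwise stabiliser of `N` (a coheir argument absorbs the stabilisers of the
other models), and `n` can be bounded uniformly over the finite subtuples, since otherwise the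
countable union of the counterexamples would not have finite Lascar distance from its image.
-/

section Formulas

open FirstOrder.Language

theorem mk_sum_lt {κ : Cardinal.{u}} (hκ : ℵ₀ < κ) {A B : Type u} (hA : #A < κ) (hB : #B < κ) :
    #(A ⊕ B) < κ := by
  simpa using Cardinal.add_lt_of_lt hκ.le hA hB

theorem mk_prod_lt {κ : Cardinal.{u}} (hκ : ℵ₀ < κ) {A B : Type u} (hA : #A < κ) (hB : #B < κ) :
    #(A × B) < κ := by
  simpa using Cardinal.mul_lt_of_lt hκ.le hA hB

theorem mk_lt_of_countable {κ : Cardinal.{u}} (hκ : ℵ₀ < κ) (A : Type u) [Countable A] :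
    #A < κ :=
  Cardinal.mk_le_aleph0.trans_lt hκ

theorem realize_iff_of_eqOn_freeVarFinset {α : Type*} [DecidableEq α] {φ : L.Formula α}
    {v v' : α → M} (h : ∀ i ∈ φ.freeVarFinset, v i = v' i) : φ.Realize v ↔ φ.Realize v' := by
  have hs : (↑φ.freeVarFinset : Set α) ⊆ ↑φ.freeVarFinset := subset_rfl
  have hv : v ∘ ((↑) : (↑φ.freeVarFinset : Set α) → α) = v' ∘ (↑) := funext fun i => h i i.2
  simp only [Formula.Realize]
  rw [← BoundedFormula.realize_restrictFreeVar' hs, hv, BoundedFormula.realize_restrictFreeVar' hs]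

theorem forall_realize_image_relabel {α β : Type*} {Φ : Set (L.Formula α)} {e : α → β}
    {v : β → M} :
    (∀ φ ∈ (Formula.relabel e) '' Φ, φ.Realize v) ↔ ∀ φ ∈ Φ, φ.Realize (v ∘ e) := by
  simp [Formula.realize_relabel]

theorem sameTp_of_forall_realize {α : Type u} {c d : α → M}
    (h : ∀ φ : L.Formula α, φ.Realize c → φ.Realize d) : SameTp (L := L) c d :=
  fun φ => ⟨h φ, fun hd => by_contra fun hc => by simpa [hd] using h φ.not (by simpa using hc)⟩

theorem sameTp_comp_equiv {α : Type u} (g : M ≃[L] M) (c : α → M) :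
    SameTp (L := L) (g ∘ c) c :=
  fun φ => StrongHomClass.realize_formula g φ

theorem SameTp.symm {α : Type u} {c d : α → M} (h : SameTp (L := L) c d) :
    SameTp (L := L) d c :=
  fun φ => (h φ).symm

def sameTpFormulas {α β : Type u} (e₁ e₂ : α → β) : Set (L.Formula β) :=
  Set.range fun φ : L.Formula α => (φ.relabel e₁).iff (φ.relabel e₂)

theorem forall_realize_sameTpFormulas {α β : Type u} {e₁ e₂ : α → β} {v : β → M} :
    (∀ φ ∈ sameTpFormulas (L := L) e₁ e₂, φ.Realize v) ↔ SameTp (L := L) (v ∘ e₁) (v ∘ e₂) := by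
  simp [sameTpFormulas, SameTp, Formula.realize_relabel]

theorem exists_realize_mem_of_realize {K : Type*} (N' : L.ElementarySubstructure M) (B : Finset K)
    {θ : L.Formula (K ⊕ N')} {z : K → M} (h : θ.Realize (Sum.elim z (↑))) :
    ∃ z' : K → M, θ.Realize (Sum.elim z' (↑)) ∧ ∀ k ∈ B, z' k ∈ N' := by
  classical
  set A : Finset K := B ∪ θ.freeVarFinset.preimage Sum.inl Sum.inl_injective.injOn
  let f : θ.freeVarFinset → N' ⊕ A := fun t => match t with
    | ⟨Sum.inl k, hk⟩ => Sum.inr ⟨k, Finset.mem_union_right _ (Finset.mem_preimage.2 hk)⟩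
    | ⟨Sum.inr n, _⟩ => Sum.inl n
  have hθ : (Formula.iExs A (θ.restrictFreeVar f)).Realize ((↑) : N' → M) :=
    Formula.realize_iExs.2 ⟨z ∘ (↑), (BoundedFormula.realize_restrictFreeVar _
      (by rintro ⟨k | n, hk⟩ <;> rfl)).2 h⟩
  obtain ⟨i, hi⟩ := Formula.realize_iExs.1 ((N'.subtype.map_formula _ id).1 hθ)
  refine ⟨fun k => if hk : k ∈ A then (i ⟨k, hk⟩ : M) else z k, ?_, fun k hk => ?_⟩
  · refine (BoundedFormula.realize_restrictFreeVar _ ?_).1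
      ((N'.subtype.map_formula _ (Sum.elim id i)).2 hi)
    rintro ⟨k | n, hk⟩
    · have hkA : k ∈ A := Finset.mem_union_right _ (Finset.mem_preimage.2 hk)
      show (i _ : M) = if hk : k ∈ A then (i ⟨k, hk⟩ : M) else z k
      rw [dif_pos hkA]
    · rfl
  · have hkA : k ∈ A := Finset.mem_union_left _ hk
    simp only [hkA, dif_pos]
    exact (i _).2

theorem IsMonster.exists_aut_of_sameTp {κ : Cardinal.{u}} (hM : IsMonster κ L M) {A : Type u}
    (hA : #A < κ) {c d : A → M} (h : SameTp (L := L) c d) : ∃ f : M ≃[L] M, ∀ i, f (c i) = d i :=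
  hM.2.1 A c d hA h

theorem IsMonster.exists_realize {κ : Cardinal.{u}} (hM : IsMonster κ L M) {K P : Type u}
    (hK : #K < κ) (hP : #P < κ) (p : P → M) {Γ : Set (L.Formula (K ⊕ P))}
    (h : ∀ Δ : Finset (L.Formula (K ⊕ P)), ↑Δ ⊆ Γ →
      ∃ z : K → M, ∀ φ ∈ Δ, φ.Realize (Sum.elim z p)) :
    ∃ z : K → M, ∀ φ ∈ Γ, φ.Realize (Sum.elim z p) :=
  hM.2.2 K P p Γ hK hP h

/-- Take `z ⊨ tp(c/N')` finitely satisfiable in `N'` over `u, f ∘ u`: a formula separating `u`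
from `f ∘ u` over `z` would be satisfied by a tuple from `N'`, which `f` fixes. -/
theorem exists_sameTp_coheir {κ : Cardinal.{u}} (hM : IsMonster κ L M)
    (N' : L.ElementarySubstructure M) (hN' : #N' < κ) {A J : Type u} (hA : #A < κ)
    (hJ : #J < κ) (c : A → M) {f : M ≃[L] M} (hf : ∀ x ∈ N', f x = x) (u : J → M) :
    ∃ z : A → M, SameTp (L := L) (Sum.elim c (↑)) (Sum.elim z ((↑) : N' → M)) ∧
      SameTp (L := L) (Sum.elim u z) (Sum.elim (f ∘ u) z) := by
  classical
  let Γ₁ : Set (L.Formula (A ⊕ (N' ⊕ (J ⊕ J)))) :=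
    Formula.relabel (Sum.map id Sum.inl) '' {φ | φ.Realize (Sum.elim c (↑))}
  let Γ₂ : Set (L.Formula (A ⊕ (N' ⊕ (J ⊕ J)))) :=
    (fun ψ : L.Formula (J ⊕ A) => (ψ.relabel (Sum.elim (Sum.inr ∘ Sum.inr ∘ Sum.inl) Sum.inl)).iff
      (ψ.relabel (Sum.elim (Sum.inr ∘ Sum.inr ∘ Sum.inr) Sum.inl))) '' Set.univ
  obtain ⟨z, hz⟩ := hM.exists_realize (Γ := Γ₁ ∪ Γ₂) hA
    (mk_sum_lt hM.1 hN' (mk_sum_lt hM.1 hJ hJ)) (Sum.elim (↑) (Sum.elim u (f ∘ u)))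
    fun Δ hΔ => by
      obtain ⟨Δ₁, hΔ₁, hΔ₁Γ⟩ := Finset.subset_set_image_iff.1
        (fun χ hχ => (Finset.mem_filter.1 hχ).2 : ↑(Δ.filter (· ∈ Γ₁)) ⊆ Γ₁)
      obtain ⟨Δ₂, -, hΔ₂Γ⟩ := Finset.subset_set_image_iff.1
        (fun χ hχ => (Finset.mem_filter.1 hχ).2 : ↑(Δ.filter (· ∈ Γ₂)) ⊆ Γ₂)
      obtain ⟨z, hz, hzN'⟩ := exists_realize_mem_of_realize N'
        (Δ₂.biUnion fun ψ => ψ.freeVarFinset.preimage Sum.inr Sum.inr_injective.injOn)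
        (Formula.realize_iInf.2 fun φ : Δ₁ => hΔ₁ φ.2 : (Formula.iInf fun φ : Δ₁ => φ.1).Realize
          (Sum.elim c (↑)))
      refine ⟨z, fun χ hχ => ?_⟩
      rcases hΔ hχ with hχΓ | hχΓ
      · obtain ⟨φ, hφ, rfl⟩ := Finset.mem_image.1 (hΔ₁Γ ▸ Finset.mem_filter.2 ⟨hχ, hχΓ⟩)
        rw [Formula.realize_relabel, Sum.elim_comp_map]
        exact Formula.realize_iInf.1 hz ⟨φ, hφ⟩
      · obtain ⟨ψ, hψ, rfl⟩ := Finset.mem_image.1 (hΔ₂Γ ▸ Finset.mem_filter.2 ⟨hχ, hχΓ⟩)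
        simp only [Formula.realize_iff, Formula.realize_relabel, Sum.comp_elim]
        change ψ.Realize (Sum.elim u z) ↔ ψ.Realize (Sum.elim (f ∘ u) z)
        rw [← StrongHomClass.realize_formula f, Sum.comp_elim]
        refine realize_iff_of_eqOn_freeVarFinset ?_
        rintro (j | k) hk
        · rfl
        · exact hf _ (hzN' k (Finset.mem_biUnion.2 ⟨ψ, hψ, Finset.mem_preimage.2 hk⟩))
  simp only [Γ₁, Γ₂, Set.mem_union, or_imp, forall_and, forall_realize_image_relabel,
    Set.image_univ, Set.forall_mem_range, Formula.realize_iff, Formula.realize_relabel,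
    Sum.comp_elim, Sum.elim_comp_map] at hz
  exact ⟨z, sameTp_of_forall_realize hz.1, hz.2⟩

end Formulas

section AutE

open FirstOrder.Language

variable {γ : Type u} {pE : Set (L.Formula (γ ⊕ γ))} {a : γ → M}

theorem frel_comp_iff {δ : Type u} (pF : Set (L.Formula (δ ⊕ δ))) (f : M ≃[L] M)
    {x y : δ → M} : Frel pF (f ∘ x) (f ∘ y) ↔ Frel pF x y := by
  simp only [Frel, ← Sum.comp_elim, StrongHomClass.realize_formula]

theorem smul_Fclass {δ : Type u} (pF : Set (L.Formula (δ ⊕ δ))) (f : M ≃[L] M) (x : δ → M) :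
    f • Fclass pF x = Fclass pF (f ∘ x) := by
  ext y
  rw [Set.mem_smul_set_iff_inv_smul_mem, Fclass, Set.mem_ofPred_eq, ← frel_comp_iff pF f]
  exact iff_of_eq (congrArg _ (funext fun i => f.apply_symm_apply (y i)))

theorem mem_AutE_iff (hE : Equivalence (Frel (M := M) pE)) (f : M ≃[L] M) :
    f ∈ AutE pE a ↔ Frel pE a (f ∘ a) := by
  rw [AutE, MulAction.mem_stabilizer_iff, smul_Fclass]
  refine ⟨fun h => ?_, fun h => Set.ext fun y => ⟨hE.trans h, hE.trans (hE.symm h)⟩⟩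
  show f ∘ a ∈ Fclass pE a
  rw [← h]
  exact hE.refl _

theorem exists_smul_eq_of_sameTp (hM : IsMonster κ L M) (hE : Equivalence (Frel (M := M) pE))
    {A : Type u} (hA : #A < κ) (hγ : #γ < κ) {c d : A → M} {w : γ → M}
    (h : SameTp (L := L) (Sum.elim c a) (Sum.elim d w)) (hw : Frel pE a w) :
    ∃ g : Ge pE a, g • c = d := by
  obtain ⟨g, hg⟩ := hM.exists_aut_of_sameTp (mk_sum_lt hM.1 hA hγ) h
  have hga : g ∘ a = w := funext fun i => hg (Sum.inr i)
  exact ⟨⟨g, (mem_AutE_iff hE g).2 (hga ▸ hw)⟩, funext fun i => hg (Sum.inl i)⟩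

end AutE

section OrbitsTypeDefinable

open FirstOrder.Language

variable {γ : Type u} (pE : Set (L.Formula (γ ⊕ γ))) (a : γ → M)

def OrbitsTypeDefinable (H : Set (Ge pE a)) (J : Type u) : Prop :=
  ∃ (K P : Type u) (p : P → M) (Γ : Set (L.Formula (K ⊕ ((J ⊕ J) ⊕ P)))), #K < κ ∧ #P < κ ∧
    ∀ x y : J → M, (∃ z : K → M, ∀ φ ∈ Γ, φ.Realize (Sum.elim z (Sum.elim (Sum.elim x y) p))) ↔
      ∃ f ∈ H, f • x = y

variable {κ pE a}

theorem OrbitsTypeDefinable.exists_smul_eq (hM : IsMonster κ L M) {H : Set (Ge pE a)}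
    {J : Type u} (hJ : #J < κ) (hH : OrbitsTypeDefinable κ pE a H J) {x y : J → M}
    (h : ∀ F : Finset J, ∃ f ∈ H, ∀ j ∈ F, (f • x) j = y j) : ∃ f ∈ H, f • x = y := by
  classical
  obtain ⟨K, P, p, Γ, hK, hP, hΓ⟩ := hH
  rw [← hΓ]
  refine hM.exists_realize hK (mk_sum_lt hM.1 (mk_sum_lt hM.1 hJ hJ) hP) _ fun Δ hΔ => ?_
  -- `Δ` mentions only finitely many coordinates of `y`
  let yVar : J → K ⊕ ((J ⊕ J) ⊕ P) := Sum.inr ∘ Sum.inl ∘ Sum.inr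
  have hyVar : yVar.Injective :=
    Sum.inr_injective.comp (Sum.inl_injective.comp Sum.inr_injective)
  obtain ⟨f, hf, hfy⟩ := h (Δ.biUnion fun φ => φ.freeVarFinset.preimage yVar hyVar.injOn)
  obtain ⟨z, hz⟩ := (hΓ x (f • x)).2 ⟨f, hf, rfl⟩
  refine ⟨z, fun φ hφ => (realize_iff_of_eqOn_freeVarFinset ?_).1 (hz φ (hΔ hφ))⟩
  rintro (k | (j | j) | q) hj
  · rfl
  · rfl
  · exact hfy j (Finset.mem_biUnion.2 ⟨φ, hφ, Finset.mem_preimage.2 hj⟩)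
  · rfl

theorem orbitsTypeDefinable_one (hκ : ℵ₀ < κ) (J : Type u) :
    OrbitsTypeDefinable κ pE a 1 J := by
  have h0 : #PEmpty.{u + 1} < κ := by simpa using Cardinal.aleph0_pos.trans hκ
  refine ⟨PEmpty, PEmpty, PEmpty.elim, Set.range fun j => (Term.var (Sum.inr (Sum.inl
    (Sum.inl j)))).equal (Term.var (Sum.inr (Sum.inl (Sum.inr j)))), h0, h0, fun x y => ?_⟩
  simp [funext_iff]

theorem OrbitsTypeDefinable.mul (hκ : ℵ₀ < κ) {H₁ H₂ : Set (Ge pE a)} {J : Type u}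
    (hJ : #J < κ) (h₁ : OrbitsTypeDefinable κ pE a H₁ J)
    (h₂ : OrbitsTypeDefinable κ pE a H₂ J) : OrbitsTypeDefinable κ pE a (H₁ * H₂) J := by
  obtain ⟨K₁, P₁, p₁, Γ₁, hK₁, hP₁, hΓ₁⟩ := h₁
  obtain ⟨K₂, P₂, p₂, Γ₂, hK₂, hP₂, hΓ₂⟩ := h₂
  -- the last auxiliary variables stand for the intermediate tuple `f₂ • x`
  refine ⟨(K₁ ⊕ K₂) ⊕ J, P₁ ⊕ P₂, Sum.elim p₁ p₂,
    Formula.relabel (Sum.elim (Sum.inl ∘ Sum.inl ∘ Sum.inl) (Sum.elim (Sum.elim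
      (Sum.inl ∘ Sum.inr) (Sum.inr ∘ Sum.inl ∘ Sum.inr)) (Sum.inr ∘ Sum.inr ∘ Sum.inl))) '' Γ₁ ∪
    Formula.relabel (Sum.elim (Sum.inl ∘ Sum.inl ∘ Sum.inr) (Sum.elim (Sum.elim
      (Sum.inr ∘ Sum.inl ∘ Sum.inl) (Sum.inl ∘ Sum.inr)) (Sum.inr ∘ Sum.inr ∘ Sum.inr))) '' Γ₂,
    mk_sum_lt hκ (mk_sum_lt hκ hK₁ hK₂) hJ, mk_sum_lt hκ hP₁ hP₂, fun x y => ?_⟩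
  simp only [Set.mem_union, or_imp, forall_and, forall_realize_image_relabel]
  constructor
  · rintro ⟨z, hz₁, hz₂⟩
    obtain ⟨f₂, hf₂, hx⟩ := (hΓ₂ x (z ∘ Sum.inr)).1 ⟨z ∘ Sum.inl ∘ Sum.inr, fun φ hφ => by
      convert hz₂ φ hφ using 2; funext i; rcases i with k | (j | j) | q <;> rfl⟩
    obtain ⟨f₁, hf₁, hy⟩ := (hΓ₁ (z ∘ Sum.inr) y).1 ⟨z ∘ Sum.inl ∘ Sum.inl, fun φ hφ => by
      convert hz₁ φ hφ using 2; funext i; rcases i with k | (j | j) | q <;> rfl⟩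
    exact ⟨f₁ * f₂, Set.mul_mem_mul hf₁ hf₂, by rw [mul_smul, hx, hy]⟩
  · rintro ⟨_, ⟨f₁, hf₁, f₂, hf₂, rfl⟩, rfl⟩
    obtain ⟨z₂, hz₂⟩ := (hΓ₂ x (f₂ • x)).2 ⟨f₂, hf₂, rfl⟩
    obtain ⟨z₁, hz₁⟩ := (hΓ₁ (f₂ • x) ((f₁ * f₂) • x)).2 ⟨f₁, hf₁, (mul_smul _ _ _).symm⟩
    refine ⟨Sum.elim (Sum.elim z₁ z₂) (f₂ • x), fun φ hφ => ?_, fun φ hφ => ?_⟩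
    · convert hz₁ φ hφ using 2; funext i; rcases i with k | (j | j) | q <;> rfl
    · convert hz₂ φ hφ using 2; funext i; rcases i with k | (j | j) | q <;> rfl

theorem OrbitsTypeDefinable.pow (hκ : ℵ₀ < κ) {H : Set (Ge pE a)} {J : Type u} (hJ : #J < κ)
    (hH : OrbitsTypeDefinable κ pE a H J) : ∀ n : ℕ, OrbitsTypeDefinable κ pE a (H ^ n) J
  | 0 => pow_zero H ▸ orbitsTypeDefinable_one hκ J
  | n + 1 => pow_succ H n ▸ (hH.pow hκ hJ n).mul hκ hJ hH

end OrbitsTypeDefinable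

section LascarSteps

open FirstOrder.Language

variable {γ : Type u} {pE : Set (L.Formula (γ ⊕ γ))} {a : γ → M}

variable (pE a) in
/-- `f • x = y` for some `f` in this set iff `x` and `y` have the same type over some
`Aut_e(𝔠)`-conjugate of `N`: one step of Lascar distance. -/
def lascarSteps (N : L.ElementarySubstructure M) : Set (Ge pE a) :=
  {f | ∃ g : Ge pE a, ∀ x ∈ N, ((g⁻¹ * f * g : Ge pE a) : M ≃[L] M) x = x}

variable {N : L.ElementarySubstructure M}

theorem mem_autfL_of_fixes (hN : #N < κ)
    (hNdcl : ∀ g : M ≃[L] M, (∀ x ∈ N, g x = x) → g ∈ AutE pE a) {f : Ge pE a}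
    (hf : ∀ x ∈ N, (f : M ≃[L] M) x = x) : f ∈ AutfL κ pE a :=
  Subgroup.subset_normalClosure ⟨N, hN, hNdcl, hf⟩

theorem lascarSteps_subset_autfL (hN : #N < κ)
    (hNdcl : ∀ g : M ≃[L] M, (∀ x ∈ N, g x = x) → g ∈ AutE pE a) :
    lascarSteps pE a N ⊆ AutfL κ pE a := by
  rintro f ⟨g, hg⟩
  have h := (AutfL_normal κ pE a).conj_mem _ (mem_autfL_of_fixes κ hN hNdcl hg) g
  rwa [show g * (g⁻¹ * f * g) * g⁻¹ = f by group] at h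

theorem conj_mem_lascarSteps {f : Ge pE a} (hf : f ∈ lascarSteps pE a N) (k : Ge pE a) :
    k * f * k⁻¹ ∈ lascarSteps pE a N := by
  obtain ⟨g, hg⟩ := hf
  refine ⟨k * g, fun x hx => ?_⟩
  rw [show (k * g)⁻¹ * (k * f * k⁻¹) * (k * g) = g⁻¹ * f * g by group]
  exact hg x hx

theorem inv_lascarSteps : (lascarSteps pE a N)⁻¹ = lascarSteps pE a N := by
  suffices h : ∀ f ∈ lascarSteps pE a N, f⁻¹ ∈ lascarSteps pE a N from
    Set.ext fun f => ⟨fun hf => inv_inv f ▸ h _ hf, h f⟩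
  rintro f ⟨g, hg⟩
  refine ⟨g, fun x hx => ?_⟩
  rw [show g⁻¹ * f⁻¹ * g = (g⁻¹ * f * g)⁻¹ by group]
  conv_lhs => rw [← hg x hx]
  exact (g⁻¹ * f * g : M ≃[L] M).symm_apply_apply x

theorem exists_lascarSteps_smul_eq_iff (hM : IsMonster κ L M)
    (hE : Equivalence (Frel (M := M) pE)) (hγ : #γ < κ) (hN : #N < κ)
    (hNdcl : ∀ g : M ≃[L] M, (∀ x ∈ N, g x = x) → g ∈ AutE pE a) {J : Type u} (hJ : #J < κ)
    {x y : J → M} :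
    (∃ f ∈ lascarSteps pE a N, f • x = y) ↔ ∃ (z : N → M) (w : γ → M),
      SameTp (L := L) (Sum.elim (↑) a) (Sum.elim z w) ∧ Frel pE a w ∧
      SameTp (L := L) (Sum.elim x z) (Sum.elim y z) := by
  constructor
  · rintro ⟨f, ⟨g, hg⟩, rfl⟩
    set g' : M ≃[L] M := ↑g
    set f' : M ≃[L] M := ↑f
    have hfix : f' ∘ g' ∘ ((↑) : N → M) = g' ∘ (↑) := funext fun n =>
      (g'.apply_symm_apply _).symm.trans (congrArg g' (hg n n.2))
    refine ⟨g' ∘ (↑), g' ∘ a, ?_, (mem_AutE_iff hE g').1 g.2, ?_⟩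
    · rw [← Sum.comp_elim]
      exact (sameTp_comp_equiv g' _).symm
    · nth_rewrite 2 [← hfix]
      show SameTp _ (Sum.elim (f' ∘ x) (f' ∘ g' ∘ ((↑) : N → M)))
      rw [← Sum.comp_elim]
      exact (sameTp_comp_equiv f' _).symm
  · rintro ⟨z, w, hzw, hw, hxy⟩
    obtain ⟨g, rfl⟩ := exists_smul_eq_of_sameTp κ hM hE hN hγ hzw hw
    obtain ⟨h, hh⟩ := hM.exists_aut_of_sameTp (mk_sum_lt hM.1 hJ hN) hxy
    have hfix : ∀ n ∈ N, ((g : M ≃[L] M)⁻¹ * h * g) n = n := fun n hn =>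
      (congrArg _ (hh (Sum.inr ⟨n, hn⟩))).trans ((g : M ≃[L] M).symm_apply_apply n)
    have hhE : h ∈ AutE pE a := by
      rw [show h = g * ((g : M ≃[L] M)⁻¹ * h * g) * (g : M ≃[L] M)⁻¹ by group]
      exact mul_mem (mul_mem g.2 (hNdcl _ hfix)) (inv_mem g.2)
    exact ⟨⟨h, hhE⟩, ⟨g, hfix⟩, funext fun j => hh (Sum.inl j)⟩

variable (pE N) in
/-- `E(a, w)`, for `w` the second block of auxiliary variables. -/
def eFormulas (J : Type u) : Set (L.Formula ((N ⊕ γ) ⊕ ((J ⊕ J) ⊕ (N ⊕ γ)))) :=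
  Formula.relabel (Sum.elim (Sum.inr ∘ Sum.inr ∘ Sum.inr) (Sum.inl ∘ Sum.inr)) '' pE

theorem orbitsTypeDefinable_lascarSteps (hM : IsMonster κ L M)
    (hE : Equivalence (Frel (M := M) pE)) (hγ : #γ < κ) (hN : #N < κ)
    (hNdcl : ∀ g : M ≃[L] M, (∀ x ∈ N, g x = x) → g ∈ AutE pE a) {J : Type u} (hJ : #J < κ) :
    OrbitsTypeDefinable κ pE a (lascarSteps pE a N) J := by
  -- with auxiliary variables `(z, w)` and parameters `(N, a)`: `(N, a) ≡ (z, w)`, `E(a, w)` and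
  -- `(x, z) ≡ (y, z)`
  refine ⟨N ⊕ γ, N ⊕ γ, Sum.elim (↑) a,
    sameTpFormulas (Sum.inr ∘ Sum.inr) Sum.inl ∪ eFormulas pE N J ∪
      sameTpFormulas (Sum.elim (Sum.inr ∘ Sum.inl ∘ Sum.inl) (Sum.inl ∘ Sum.inl))
        (Sum.elim (Sum.inr ∘ Sum.inl ∘ Sum.inr) (Sum.inl ∘ Sum.inl)),
    mk_sum_lt hM.1 hN hγ, mk_sum_lt hM.1 hN hγ, fun x y => ?_⟩
  rw [exists_lascarSteps_smul_eq_iff κ hM hE hγ hN hNdcl hJ]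
  simp only [eFormulas, Set.mem_union, or_imp, forall_and, forall_realize_sameTpFormulas,
    forall_realize_image_relabel, Sum.comp_elim]
  constructor
  · rintro ⟨zw, ⟨h₁, h₂⟩, h₃⟩
    exact ⟨zw ∘ Sum.inl, zw ∘ Sum.inr, by rwa [Sum.elim_comp_inl_inr], h₂, h₃⟩
  · rintro ⟨z, w, h₁, h₂, h₃⟩
    exact ⟨Sum.elim z w, ⟨h₁, h₂⟩, h₃⟩

theorem exists_lascarSteps_smul_eq_of_mem_modelFixers (hM : IsMonster κ L M)
    (hE : Equivalence (Frel (M := M) pE)) (hγ : #γ < κ) (hN : #N < κ)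
    (hNdcl : ∀ g : M ≃[L] M, (∀ x ∈ N, g x = x) → g ∈ AutE pE a) {f : Ge pE a}
    (hf : f ∈ modelFixers κ pE a) {J : Type u} (hJ : #J < κ) (u : J → M) :
    ∃ d ∈ lascarSteps pE a N, d • u = f • u := by
  obtain ⟨N', hN', hN'dcl, hfN'⟩ := hf
  obtain ⟨z, hz, hzu⟩ := exists_sameTp_coheir hM N' hN' hN hJ ((↑) : N → M) hfN' u
  obtain ⟨h, hh⟩ := hM.exists_aut_of_sameTp (mk_sum_lt hM.1 hN hN') hz
  have hhE : h ∈ AutE pE a := hN'dcl h fun x hx => hh (Sum.inr ⟨x, hx⟩)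
  refine (exists_lascarSteps_smul_eq_iff κ hM hE hγ hN hNdcl hJ).2
    ⟨z, h ∘ a, ?_, (mem_AutE_iff hE h).1 hhE, hzu⟩
  rw [show z = h ∘ (↑) from funext fun n => (hh (Sum.inl n)).symm, ← Sum.comp_elim]
  exact (sameTp_comp_equiv h _).symm

theorem exists_pow_lascarSteps_smul_eq (hM : IsMonster κ L M)
    (hE : Equivalence (Frel (M := M) pE)) (hγ : #γ < κ) (hN : #N < κ)
    (hNdcl : ∀ g : M ≃[L] M, (∀ x ∈ N, g x = x) → g ∈ AutE pE a) {f : Ge pE a}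
    (hf : f ∈ AutfL κ pE a) {J : Type u} (hJ : #J < κ) :
    ∀ u : J → M, ∃ n : ℕ, ∃ d ∈ lascarSteps pE a N ^ n, d • u = f • u := by
  induction hf using Subgroup.closure_induction with
  | mem g hg =>
    obtain ⟨mf, hmf, c, rfl⟩ := Group.mem_conjugatesOfSet_iff.1 hg |>.imp fun _ h =>
      h.imp_right isConj_iff.1
    intro u
    obtain ⟨d, hd, hdu⟩ :=
      exists_lascarSteps_smul_eq_of_mem_modelFixers κ hM hE hγ hN hNdcl hmf hJ (c⁻¹ • u)
    refine ⟨1, c * d * c⁻¹, (pow_one (lascarSteps pE a N)).symm ▸ conj_mem_lascarSteps hd c, ?_⟩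
    simp only [mul_smul, hdu]
  | one => exact fun u => ⟨0, 1, by simp, one_smul _ u⟩
  | mul f₁ f₂ _ _ ih₁ ih₂ =>
    intro u
    obtain ⟨n₂, d₂, hd₂, hu₂⟩ := ih₂ u
    obtain ⟨n₁, d₁, hd₁, hu₁⟩ := ih₁ (f₂ • u)
    exact ⟨n₁ + n₂, d₁ * d₂, pow_add (lascarSteps pE a N) n₁ n₂ ▸ Set.mul_mem_mul hd₁ hd₂,
      by rw [mul_smul, hu₂, hu₁, mul_smul]⟩
  | inv f _ ih =>
    intro u
    obtain ⟨n, d, hd, hdu⟩ := ih (f⁻¹ • u)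
    refine ⟨n, d⁻¹, ?_, by rw [inv_smul_eq_iff, hdu, smul_inv_smul]⟩
    rwa [← inv_lascarSteps, inv_pow, Set.inv_mem_inv]

end LascarSteps

section ClosedSets

open FirstOrder.Language

theorem mem_of_isClosed_of_forall_finset {F : Type*} {Z : Set (F → Bool)} (hZ : IsClosed Z)
    {t : F → Bool} (h : ∀ s : Finset F, ∃ q ∈ Z, ∀ φ ∈ s, q φ = t φ) : t ∈ Z := by
  refine hZ.closure_subset (mem_closure_iff.2 fun o ho hto => ?_)
  obtain ⟨s, U, hU, hsU⟩ := isOpen_pi_iff.1 ho t hto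
  obtain ⟨q, hqZ, hq⟩ := h s
  exact ⟨q, hsU fun φ hφ => hq φ hφ ▸ (hU φ hφ).2, hqZ⟩

/-- A closed set `Z` of truth-value assignments is cut out by excluding the finite patterns
`(s, b)` that no point of `Z` matches; the formula `⋁_{φ ∈ s} (φ ≠ b φ)` excludes one of them. -/
def avoidingFormulas {α : Type*} (Z : Set (L.Formula α → Bool)) : Set (L.Formula α) :=
  {χ | ∃ (s : Finset (L.Formula α)) (b : L.Formula α → Bool), (∀ q ∈ Z, ∃ φ ∈ s, q φ ≠ b φ) ∧
    χ = Formula.iSup fun φ : s => if b φ then φ.1.not else φ.1}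

theorem realize_ite_not {α : Type*} (φ : L.Formula α) (b : Bool) (v : α → M) :
    (if b then φ.not else φ).Realize v ↔ {ψ : L.Formula α | ψ.Realize v}.boolIndicator φ ≠ b := by
  cases b <;> by_cases hφ : φ.Realize v <;> simp [Set.boolIndicator, hφ]

theorem forall_realize_avoidingFormulas {α : Type*} {Z : Set (L.Formula α → Bool)}
    (hZ : IsClosed Z) {v : α → M} :
    (∀ χ ∈ avoidingFormulas Z, χ.Realize v) ↔ {φ : L.Formula α | φ.Realize v}.boolIndicator ∈ Z := by
  simp only [avoidingFormulas, Set.mem_ofPred_eq, forall_exists_index, and_imp]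
  constructor
  · refine fun h => mem_of_isClosed_of_forall_finset hZ fun s => by_contra fun hs => ?_
    push Not at hs
    obtain ⟨φ, hφ⟩ := Formula.realize_iSup.1 (h _ s _ hs rfl)
    exact (realize_ite_not _ _ _).1 hφ rfl
  · rintro ht _ s b hsb rfl
    obtain ⟨φ, hφs, hφ⟩ := hsb _ ht
    exact Formula.realize_iSup.2 ⟨⟨φ, hφs⟩, (realize_ite_not _ _ _).2 hφ⟩

variable {γ : Type u} {pE : Set (L.Formula (γ ⊕ γ))} {a : γ → M} {N : L.ElementarySubstructure M}

theorem projT_eq_of_tpOver_eq (hM : IsMonster κ L M) (hN : #N < κ)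
    (hNdcl : ∀ g : M ≃[L] M, (∀ x ∈ N, g x = x) → g ∈ AutE pE a) {f g : Ge pE a}
    (h : tpOver (L := L) (↑) (f • ((↑) : N → M)) = tpOver (↑) (g • ((↑) : N → M))) :
    projT κ pE a f = projT κ pE a g := by
  have hfg : SameTp (L := L) (Sum.elim (f • ((↑) : N → M)) ((↑) : N → M))
      (Sum.elim (g • ((↑) : N → M)) ((↑) : N → M)) :=
    fun φ => Iff.of_eq (congrArg (φ ∈ ·) h)
  obtain ⟨h₀, hh₀⟩ := hM.exists_aut_of_sameTp (mk_sum_lt hM.1 hN hN) hfg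
  have hfix : ∀ x ∈ N, h₀ x = x := fun x hx => hh₀ (Sum.inr ⟨x, hx⟩)
  set k : Ge pE a := ⟨h₀, hNdcl h₀ hfix⟩
  have hk : k ∈ AutfL κ pE a := mem_autfL_of_fixes κ hN hNdcl hfix
  have hgkf : g⁻¹ * k * f ∈ AutfL κ pE a := mem_autfL_of_fixes κ hN hNdcl
    fun x hx => (congrArg _ (hh₀ (Sum.inl ⟨x, hx⟩))).trans ((g : M ≃[L] M).symm_apply_apply x)
  refine QuotientGroup.eq.2 ?_
  have hfkf := (AutfL_normal κ pE a).conj_mem _ hk f⁻¹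
  rw [inv_inv] at hfkf
  rw [show f⁻¹ * g = f⁻¹ * k * f * (g⁻¹ * k * f)⁻¹ by group]
  exact mul_mem hfkf (inv_mem hgkf)

theorem exists_isClosed_boolIndicator_iff (hM : IsMonster κ L M) (hN : #N < κ)
    (hNdcl : ∀ g : M ≃[L] M, (∀ x ∈ N, g x = x) → g ∈ AutE pE a) {C : Set (GalT κ pE a)}
    (hC : @IsClosed _ (galTopT κ pE a N) C) :
    ∃ Z : Set (L.Formula (N ⊕ N) → Bool), IsClosed Z ∧ ∀ g : Ge pE a,
      projT κ pE a g ∈ C ↔ (tpOver (L := L) (↑) (g • ((↑) : N → M))).boolIndicator ∈ Z := by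
  let _ := typeSetTop (SMod pE a N)
  let _ := galTopT κ pE a N
  obtain ⟨Z, hZ, hZC⟩ := isClosed_induced_iff.1 (hC.preimage (continuous_coinduced_rng
    (f := nuT κ pE a N)))
  refine ⟨Z, hZ, fun g => ?_⟩
  let t : SMod pE a N := ⟨_, g, rfl⟩
  have hg : nuT κ pE a N t = projT κ pE a g :=
    projT_eq_of_tpOver_eq κ hM hN hNdcl (Set.mem_range.1 t.2).choose_spec
  rw [← hg, ← Set.mem_preimage, ← hZC]
  rfl

theorem orbitsTypeDefinable_preimage_projT (hM : IsMonster κ L M)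
    (hE : Equivalence (Frel (M := M) pE)) (hγ : #γ < κ) (hN : #N < κ)
    (hNdcl : ∀ g : M ≃[L] M, (∀ x ∈ N, g x = x) → g ∈ AutE pE a) {C : Set (GalT κ pE a)}
    (hC : @IsClosed _ (galTopT κ pE a N) C) {J : Type u} (hJ : #J < κ) :
    OrbitsTypeDefinable κ pE a (projT κ pE a ⁻¹' C) J := by
  obtain ⟨Z, hZ, hCZ⟩ := exists_isClosed_boolIndicator_iff κ hM hN hNdcl hC
  -- with auxiliary variables `(z, w)` and parameters `(N, a)`: `(x, N, a) ≡ (y, z, w)`, `E(a, w)`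
  -- and `tp(z/N)` lies in `Z`
  refine ⟨N ⊕ γ, N ⊕ γ, Sum.elim (↑) a,
    sameTpFormulas (Sum.elim (Sum.elim (Sum.inr ∘ Sum.inl ∘ Sum.inl) (Sum.inr ∘ Sum.inr ∘ Sum.inl))
        (Sum.inr ∘ Sum.inr ∘ Sum.inr))
      (Sum.elim (Sum.elim (Sum.inr ∘ Sum.inl ∘ Sum.inr) (Sum.inl ∘ Sum.inl)) (Sum.inl ∘ Sum.inr)) ∪
    eFormulas pE N J ∪
    Formula.relabel (Sum.elim (Sum.inl ∘ Sum.inl) (Sum.inr ∘ Sum.inr ∘ Sum.inl)) ''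
      avoidingFormulas Z,
    mk_sum_lt hM.1 hN hγ, mk_sum_lt hM.1 hN hγ, fun x y => ?_⟩
  simp only [eFormulas, Set.mem_union, or_imp, forall_and, forall_realize_sameTpFormulas,
    forall_realize_image_relabel, forall_realize_avoidingFormulas hZ, Sum.comp_elim]
  constructor
  · rintro ⟨zw, ⟨h₁, h₂⟩, h₃⟩
    obtain ⟨g, hg⟩ := exists_smul_eq_of_sameTp κ hM hE (mk_sum_lt hM.1 hJ hN) hγ h₁ h₂
    have hgN : g • ((↑) : N → M) = zw ∘ Sum.inl := funext fun n => congrFun hg (Sum.inr n)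
    exact ⟨g, (hCZ g).2 (hgN ▸ h₃), funext fun j => congrFun hg (Sum.inl j)⟩
  · rintro ⟨f, hf, rfl⟩
    refine ⟨Sum.elim (f • (↑)) (f • a), ⟨?_, (mem_AutE_iff hE f).1 f.2⟩, (hCZ f).1 hf⟩
    convert (sameTp_comp_equiv (f : M ≃[L] M) (Sum.elim (Sum.elim x ((↑) : N → M)) a)).symm
      using 1
    all_goals funext i; rcases i with (j | n) | c <;> rfl

end ClosedSets

section CountableTuples

open FirstOrder.Language

variable {γ : Type u} {pE : Set (L.Formula (γ ⊕ γ))} {a : γ → M}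
variable {V β : Type u} {pS : Set (L.Formula (V ⊕ β))} {bp : β → M}
variable {N : L.ElementarySubstructure M}

theorem exists_smul_flat_eq_of_forall_finset (hM : IsMonster κ L M) (hV : #V < κ)
    {hInv : SolInv pE a pS bp} {H : Set (Ge pE a)} {ι : Type u} (hι : #ι < κ)
    (hH : OrbitsTypeDefinable κ pE a H (ι × V)) (σ : GS pE a hInv) (c : ι → SolT pS bp)
    (h : ∀ s : Finset ι, ∃ f ∈ H, f • flat (c ∘ ((↑) : s → ι)) = flat (σ • (c ∘ (↑)))) :
    ∃ f ∈ H, f • flat c = flat (σ • c) :=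
  hH.exists_smul_eq hM (mk_prod_lt hM.1 hι hV) fun F => by
    classical
    obtain ⟨f, hf, hfc⟩ := h (F.image Prod.fst)
    exact ⟨f, hf, fun j hj => congrFun hfc (⟨j.1, Finset.mem_image_of_mem _ hj⟩, j.2)⟩

theorem exists_preimage_projT_smul_flat_eq (hM : IsMonster κ L M)
    (hE : Equivalence (Frel (M := M) pE)) (hγ : #γ < κ) (hV : #V < κ) (hN : #N < κ)
    (hNdcl : ∀ g : M ≃[L] M, (∀ x ∈ N, g x = x) → g ∈ AutE pE a) {hInv : SolInv pE a pS bp}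
    {C : Set (GalT κ pE a)} (hC : @IsClosed _ (galTopT κ pE a N) C) (σ : GS pE a hInv)
    (hσ : ∀ (ι : Type u), Countable ι → ∀ c : ι → SolT pS bp,
      ∃ f ∈ projT κ pE a ⁻¹' C, f • flat c = flat (σ • c))
    {ι : Type u} (hι : #ι < κ) (c : ι → SolT pS bp) :
    ∃ f ∈ projT κ pE a ⁻¹' C, f • flat c = flat (σ • c) :=
  exists_smul_flat_eq_of_forall_finset κ hM hV hι
    (orbitsTypeDefinable_preimage_projT κ hM hE hγ hN hNdcl hC (mk_prod_lt hM.1 hι hV)) σ c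
    fun s => hσ s inferInstance _

theorem lEq_flat_of_forall_countable (hM : IsMonster κ L M)
    (hE : Equivalence (Frel (M := M) pE)) (hγ : #γ < κ) (hV : #V < κ) (hN : #N < κ)
    (hNdcl : ∀ g : M ≃[L] M, (∀ x ∈ N, g x = x) → g ∈ AutE pE a) {hInv : SolInv pE a pS bp}
    (σ : GS pE a hInv)
    (hσ : ∀ (ι : Type u), Countable ι → ∀ c : ι → SolT pS bp,
      LEq κ pE a (flat c) (flat (σ • c)))
    {ι : Type u} (hι : #ι < κ) (c : ι → SolT pS bp) :
    LEq κ pE a (flat c) (flat (σ • c)) := by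
  obtain ⟨n, hn⟩ : ∃ n, ∀ s : Finset ι, ∃ d ∈ lascarSteps pE a N ^ n,
      d • flat (c ∘ ((↑) : s → ι)) = flat (σ • (c ∘ (↑))) := by
    by_contra! hbad
    choose s hs using hbad
    let U : Set ι := ⋃ n, ↑(s n)
    have hU : Countable U := (Set.countable_iUnion fun n => (s n).countable_toSet).to_subtype
    obtain ⟨f, hf, hfc⟩ := hσ U hU (c ∘ Subtype.val)
    obtain ⟨n, d, hd, hdc⟩ := exists_pow_lascarSteps_smul_eq κ hM hE hγ hN hNdcl hf
      (mk_prod_lt hM.1 (mk_lt_of_countable hM.1 U) hV) (flat (c ∘ Subtype.val))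
    refine hs n d hd (funext fun j => ?_)
    exact congrFun (hdc.trans hfc) (⟨j.1, Set.mem_iUnion.2 ⟨n, j.1.2⟩⟩, j.2)
  obtain ⟨d, hd, hdc⟩ := exists_smul_flat_eq_of_forall_finset κ hM hV hι
    ((orbitsTypeDefinable_lascarSteps κ hM hE hγ hN hNdcl (mk_prod_lt hM.1 hι hV)).pow hM.1
      (mk_prod_lt hM.1 hι hV) n) σ c hn
  exact ⟨d, Subgroup.pow_subset (lascarSteps_subset_autfL κ hN hNdcl) hd, hdc⟩

end CountableTuples

section Statements

variable {γ : Type u} (pE : Set (L.Formula (γ ⊕ γ))) (a : γ → M)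
variable {V β : Type u} {pS : Set (L.Formula (V ⊕ β))} {bp : β → M}

theorem autfXS_eq_autfXS_omega (hM : IsMonster κ L M) (hγ : #γ < κ)
    (hE : Equivalence (Frel (M := M) pE)) (hV : #V < κ)
    (hInv : SolInv pE a pS bp)
    (N : L.ElementarySubstructure M) (hN : #N < κ)
    (hNdcl : ∀ g : M ≃[L] M, (∀ x ∈ N, g x = x) → g ∈ AutE pE a) :
    (∀ σ : GS pE a hInv, σ ∈ AutfLS κ pE a hInv ↔
        ∀ (ι : Type u), Countable ι → ∀ c : ι → SolT pS bp,
          LEq κ pE a (flat c) (flat (σ • c))) ∧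
    (∀ σ : GS pE a hInv, σ ∈ AutfKPSset κ pE a hInv N ↔
        ∀ (ι : Type u), Countable ι → ∀ c : ι → SolT pS bp,
          KPeq κ pE a N (flat c) (flat (σ • c))) ∧
    (∀ σ : GS pE a hInv, σ ∈ AutfSSset κ pE a hInv N ↔
        ∀ (ι : Type u), Countable ι → ∀ c : ι → SolT pS bp,
          Seq κ pE a N (flat c) (flat (σ • c))) := by
  refine ⟨fun σ => ⟨fun h ι _ c => h ι (mk_lt_of_countable hM.1 ι) c,
      fun h ι hι c => lEq_flat_of_forall_countable κ hM hE hγ hV hN hNdcl σ h hι c⟩,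
    fun σ => ⟨fun h ι _ c => h ι (mk_lt_of_countable hM.1 ι) c,
      fun h ι hι c => exists_preimage_projT_smul_flat_eq κ hM hE hγ hV hN hNdcl
        (@isClosed_closure _ (galTopT κ pE a N) _) σ h hι c⟩,
    fun σ => ⟨fun h ι _ c => h ι (mk_lt_of_countable hM.1 ι) c,
      fun h ι hι c => exists_preimage_projT_smul_flat_eq κ hM hE hγ hV hN hNdcl
        (@isClosed_connectedComponent _ (galTopT κ pE a N) _) σ h hι c⟩⟩

end Statements

end RelLascar
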